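/- Let TM₀ be the Thue-Morse word, i.e., the fixed point beginning in 0 of the Thue-Morse morphism μ(0) = 01, μ(1) = 10 (equivalently, TM₀(n) is the parity of the number of 1's in the binary expansion of n). Then ρ^ab_{TM₀}(n) = 2 for all odd n and ρ^ab_{TM₀}(n) = 3 for all even n ≥ 2. -/

import Mathlib

/-- The factor of the infinite word `ω` of length `n` starting at position `i`. -/
def factor {A : Type*} (ω : ℕ → A) (i n : ℕ) : List A :=
  (List.range n).map fun j => ω (i + j)

/-- The abelian complexity of `ω`: the number of abelian equivalence classes of
factors of `ω` of length `n`. -/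
noncomputable def abelianComplexity {A : Type*} [DecidableEq A] (ω : ℕ → A) (n : ℕ) : ℕ :=
  Set.ncard {c : A → ℕ | ∃ i : ℕ, c = fun a => (factor ω i n).count a}

open Fin.NatCast in
/-- The Thue-Morse word: `TM n` is the parity of the number of `1`'s in the
binary expansion of `n`. -/
def TM : ℕ → Fin 2 := fun n => ((Nat.digits 2 n).count 1 : Fin 2)

/-! Since `μ(0) = 01` and `μ(1) = 10`, a factor of even length starting at an even position
consists of blocks `01`, `10` and contains exactly half as many `1`'s as letters. Every factor is
such an aligned factor with at most one letter added at each end, so a factor of length `2b + 1`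
has `b` or `b + 1` ones and one of length `2b + 2` has `b`, `b + 1` or `b + 2`; over a binary
alphabet the number of `1`'s determines the abelian class. All these values occur: the extreme
ones for length `2b + 2` come from positions `2a + 1` with `TM a ≠ TM (a + b + 1)`, and such `a`
are found just below `2 ^ t` and `3 * 2 ^ t` using `TM (2 ^ t + x) = TM x + 1` for `x < 2 ^ t`. -/

theorem TM_zero : TM 0 = 0 := rfl

theorem TM_two_mul (k : ℕ) : TM (2 * k) = TM k := by
  rcases Nat.eq_zero_or_pos k with rfl | hk
  · rfl
  · simp [TM, Nat.digits_def' one_lt_two (by omega : 0 < 2 * k)]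

theorem TM_two_mul_add_one (k : ℕ) : TM (2 * k + 1) = TM k + 1 := by
  simp only [TM, Nat.digits_def' one_lt_two (by omega : 0 < 2 * k + 1)]
  rw [show (2 * k + 1) % 2 = 1 by omega, show (2 * k + 1) / 2 = k by omega,
    List.count_cons_self]
  ext
  simp only [Fin.val_add, Fin.val_natCast, Fin.val_one]
  omega

theorem TM_two_pow_add {t x : ℕ} (hx : x < 2 ^ t) : TM (2 ^ t + x) = TM x + 1 := by
  induction t generalizing x with
  | zero =>
    obtain rfl : x = 0 := by simpa using hx
    rfl
  | succ t ih =>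
    obtain ⟨y, rfl | rfl⟩ := Nat.even_or_odd' x
    · rw [pow_succ', ← mul_add, TM_two_mul, TM_two_mul, ih (by omega)]
    · rw [pow_succ', ← add_assoc, ← mul_add, TM_two_mul_add_one, TM_two_mul_add_one,
        ih (by omega)]

theorem TM_two_pow (t : ℕ) : TM (2 ^ t) = 1 := by
  simpa [TM_zero] using TM_two_pow_add (Nat.two_pow_pos t)

theorem exists_TM_two_pow_sub_eq_zero {m : ℕ} (hm : 0 < m) :
    ∃ t, m ≤ 2 ^ t ∧ TM (2 ^ t - m) = 0 := by
  obtain ⟨s, hs⟩ : ∃ s, m ≤ 2 ^ s := ⟨m, Nat.lt_two_pow_self.le⟩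
  by_cases h : TM (2 ^ s - m) = 0
  · exact ⟨s, hs, h⟩
  · refine ⟨s + 1, hs.trans (Nat.pow_le_pow_right two_pos s.le_succ), ?_⟩
    have hsub : 2 ^ (s + 1) - m = 2 ^ s + (2 ^ s - m) := by rw [pow_succ]; omega
    rw [hsub, TM_two_pow_add (by omega), (by omega : TM (2 ^ s - m) = 1)]
    rfl

theorem exists_TM_eq_zero_TM_add_eq_one {m : ℕ} (hm : 0 < m) :
    ∃ a, TM a = 0 ∧ TM (a + m) = 1 := by
  obtain ⟨t, hmt, ht⟩ := exists_TM_two_pow_sub_eq_zero hm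
  exact ⟨2 ^ t - m, ht, by rw [Nat.sub_add_cancel hmt, TM_two_pow]⟩

theorem exists_TM_eq_one_TM_add_eq_zero {m : ℕ} (hm : 0 < m) :
    ∃ a, TM a = 1 ∧ TM (a + m) = 0 := by
  obtain ⟨t, hmt, ht⟩ := exists_TM_two_pow_sub_eq_zero hm
  have hlt : 2 ^ t - m < 2 ^ (t + 1) := by rw [pow_succ]; omega
  refine ⟨2 ^ (t + 1) + (2 ^ t - m), by rw [TM_two_pow_add hlt, ht]; rfl, ?_⟩
  rw [add_assoc, Nat.sub_add_cancel hmt, TM_two_pow_add (Nat.pow_lt_pow_succ one_lt_two),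
    TM_two_pow]
  rfl

theorem factor_add {A : Type*} (ω : ℕ → A) (i m n : ℕ) :
    factor ω i (m + n) = factor ω i m ++ factor ω (i + m) n := by
  simp only [factor, List.range_add, List.map_append, List.map_map]
  congr 2
  funext j
  simp [add_assoc]

theorem length_factor {A : Type*} (ω : ℕ → A) (i n : ℕ) : (factor ω i n).length = n := by
  simp [factor]

theorem List.count_zero_add_count_one (l : List (Fin 2)) : l.count 0 + l.count 1 = l.length := by
  induction l with
  | nil => rfl
  | cons x l ih => fin_cases x <;> simp <;> omega

def countOnes (ω : ℕ → Fin 2) (i n : ℕ) : ℕ := (factor ω i n).count 1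

theorem abelianComplexity_eq_ncard_range_countOnes (ω : ℕ → Fin 2) (n : ℕ) :
    abelianComplexity ω n = (Set.range fun i => countOnes ω i n).ncard := by
  have hrange : (Set.range fun i => countOnes ω i n) =
      (fun c : Fin 2 → ℕ => c 1) '' {c | ∃ i, c = fun a => (factor ω i n).count a} := by
    ext v
    simp [countOnes, eq_comm]
  rw [hrange, Set.InjOn.ncard_image]
  · rfl
  rintro _ ⟨i, rfl⟩ _ ⟨j, rfl⟩ (h : (factor ω i n).count 1 = (factor ω j n).count 1)
  have hi := (factor ω i n).count_zero_add_count_one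
  have hj := (factor ω j n).count_zero_add_count_one
  rw [length_factor] at hi hj
  funext a
  fin_cases a
  · change (factor ω i n).count 0 = (factor ω j n).count 0
    omega
  · exact h

/-- `ω` lies in the image of the Thue-Morse morphism, i.e. is a concatenation of the blocks `01`
and `10`. -/
def IsThueMorseImage (ω : ℕ → Fin 2) : Prop :=
  ∀ k, (ω (2 * k) : ℕ) + ω (2 * k + 1) = 1

section

variable {ω : ℕ → Fin 2}

theorem countOnes_add (i m n : ℕ) :
    countOnes ω i (m + n) = countOnes ω i m + countOnes ω (i + m) n := by
  simp only [countOnes, factor_add, List.count_append]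

theorem countOnes_one (i : ℕ) : countOnes ω i 1 = ω i := by
  simp only [countOnes, factor, List.range_one, List.map_singleton, add_zero]
  generalize ω i = x
  fin_cases x <;> rfl

theorem countOnes_two_mul_two_mul (hω : IsThueMorseImage ω) (a b : ℕ) :
    countOnes ω (2 * a) (2 * b) = b := by
  induction b generalizing a with
  | zero => rfl
  | succ b ih =>
    rw [show 2 * (b + 1) = 1 + 1 + 2 * b by ring, countOnes_add, countOnes_add, countOnes_one,
      countOnes_one, hω, show 2 * a + (1 + 1) = 2 * (a + 1) by ring, ih, add_comm]

theorem countOnes_two_mul_odd (hω : IsThueMorseImage ω) (a b : ℕ) :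
    countOnes ω (2 * a) (2 * b + 1) = b + ω (2 * (a + b)) := by
  rw [countOnes_add, countOnes_two_mul_two_mul hω, countOnes_one, mul_add]

theorem countOnes_two_mul_add_one_odd (hω : IsThueMorseImage ω) (a b : ℕ) :
    countOnes ω (2 * a + 1) (2 * b + 1) = ω (2 * a + 1) + b := by
  rw [add_comm (2 * b), countOnes_add, countOnes_one, add_assoc, ← mul_add_one,
    countOnes_two_mul_two_mul hω]

theorem countOnes_two_mul_add_one_even (hω : IsThueMorseImage ω) (a b : ℕ) :
    countOnes ω (2 * a + 1) (2 * b + 2) = ω (2 * a + 1) + b + ω (2 * (a + b + 1)) := by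
  rw [show 2 * b + 2 = 2 * b + 1 + 1 by ring, countOnes_add, countOnes_two_mul_add_one_odd hω,
    countOnes_one, show 2 * a + 1 + (2 * b + 1) = 2 * (a + b + 1) by ring]

theorem countOnes_odd_mem_Icc (hω : IsThueMorseImage ω) (i b : ℕ) :
    countOnes ω i (2 * b + 1) ∈ Set.Icc b (b + 1) := by
  obtain ⟨a, rfl | rfl⟩ := Nat.even_or_odd' i
  · have := (ω (2 * (a + b))).isLt
    rw [countOnes_two_mul_odd hω]
    exact ⟨by omega, by omega⟩
  · have := (ω (2 * a + 1)).isLt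
    rw [countOnes_two_mul_add_one_odd hω]
    exact ⟨by omega, by omega⟩

theorem countOnes_even_mem_Icc (hω : IsThueMorseImage ω) (i b : ℕ) :
    countOnes ω i (2 * b + 2) ∈ Set.Icc b (b + 2) := by
  obtain ⟨a, rfl | rfl⟩ := Nat.even_or_odd' i
  · rw [← mul_add_one, countOnes_two_mul_two_mul hω]
    exact ⟨by omega, by omega⟩
  · have := (ω (2 * a + 1)).isLt
    have := (ω (2 * (a + b + 1))).isLt
    rw [countOnes_two_mul_add_one_even hω]
    exact ⟨by omega, by omega⟩

end

theorem isThueMorseImage_TM : IsThueMorseImage TM := fun k => by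
  rw [TM_two_mul, TM_two_mul_add_one]
  generalize TM k = x
  fin_cases x <;> rfl

theorem range_countOnes_TM_odd (b : ℕ) :
    Set.range (fun i => countOnes TM i (2 * b + 1)) = Set.Icc b (b + 1) := by
  have hTM := isThueMorseImage_TM
  refine Set.Subset.antisymm ?_ fun x hx => ?_
  · rintro _ ⟨i, rfl⟩
    exact countOnes_odd_mem_Icc hTM i b
  obtain rfl | rfl : b = x ∨ x = b + 1 := by simp only [Set.mem_Icc] at hx; omega
  · refine ⟨2 * 1 + 1, ?_⟩
    dsimp only
    rw [countOnes_two_mul_add_one_odd hTM,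
      show TM (2 * 1 + 1) = 0 from rfl, Fin.val_zero, zero_add]
  · refine ⟨2 * 0 + 1, ?_⟩
    dsimp only
    rw [countOnes_two_mul_add_one_odd hTM,
      show TM (2 * 0 + 1) = 1 from rfl, Fin.val_one, add_comm]

theorem range_countOnes_TM_even (b : ℕ) :
    Set.range (fun i => countOnes TM i (2 * b + 2)) = Set.Icc b (b + 2) := by
  have hTM := isThueMorseImage_TM
  refine Set.Subset.antisymm ?_ fun x hx => ?_
  · rintro _ ⟨i, rfl⟩
    exact countOnes_even_mem_Icc hTM i b
  obtain rfl | rfl | rfl : b = x ∨ x = b + 1 ∨ x = b + 2 := by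
    simp only [Set.mem_Icc] at hx; omega
  · obtain ⟨a, ha, hab⟩ := exists_TM_eq_one_TM_add_eq_zero (by omega : 0 < b + 1)
    refine ⟨2 * a + 1, ?_⟩
    dsimp only
    rw [countOnes_two_mul_add_one_even hTM, TM_two_mul_add_one, TM_two_mul, add_assoc a, ha, hab,
      show (1 : Fin 2) + 1 = 0 from rfl, Fin.val_zero]
    omega
  · exact ⟨2 * 0, by dsimp only; rw [← mul_add_one, countOnes_two_mul_two_mul hTM]⟩
  · obtain ⟨a, ha, hab⟩ := exists_TM_eq_zero_TM_add_eq_one (by omega : 0 < b + 1)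
    refine ⟨2 * a + 1, ?_⟩
    dsimp only
    rw [countOnes_two_mul_add_one_even hTM, TM_two_mul_add_one, TM_two_mul, add_assoc a, ha, hab,
      zero_add, Fin.val_one]
    omega

/-- The abelian complexity of the Thue-Morse word is `2` at odd lengths and
`3` at even lengths `≥ 2`. -/
theorem abelianComplexity_thueMorse :
    (∀ n : ℕ, Odd n → abelianComplexity TM n = 2) ∧
    (∀ n : ℕ, Even n → 2 ≤ n → abelianComplexity TM n = 3) := by
  refine ⟨?_, ?_⟩
  · rintro n ⟨b, rfl⟩
    rw [abelianComplexity_eq_ncard_range_countOnes, range_countOnes_TM_odd, Set.ncard_Icc_nat]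
    omega
  · rintro n ⟨b, rfl⟩ hn
    obtain ⟨c, rfl⟩ : ∃ c, b = c + 1 := ⟨b - 1, by omega⟩
    rw [show c + 1 + (c + 1) = 2 * c + 2 by ring, abelianComplexity_eq_ncard_range_countOnes,
      range_countOnes_TM_even, Set.ncard_Icc_nat]
    omega
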